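/- If c > a, d < b, and c + d < 0, then the set F = {(x,y,z) ∈ S² : z < (a+dx)/c} is invariant under V. -/

import Mathlib

/-! The quantity `a + d x - c z`, positive exactly on `F`, is transformed by `V` as
`a + d x' - c z' = (1 - c y)(a + d x - c z) - (c + d) x (b - d y)`.
The constraints force `0 < c < 1` and `d < 0`, so on the simplex the first factor `1 - c y` is
positive and the correction term `-(c + d) x (b - d y)` is nonnegative; hence positivity
propagates. -/

open Filter Topology

noncomputable def V (a b c d : ℝ) (p : ℝ × ℝ × ℝ) : ℝ × ℝ × ℝ :=
  (p.1 * (1 - b + d * p.2.1),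
   p.2.1 * (1 - a - d * p.1 + c * p.2.2),
   p.2.2 * (1 - c * p.2.1) + a * p.2.1 + b * p.1)

def S2 : Set (ℝ × ℝ × ℝ) :=
  {p | 0 ≤ p.1 ∧ 0 ≤ p.2.1 ∧ 0 ≤ p.2.2 ∧ p.1 + p.2.1 + p.2.2 = 1}

theorem V_sum (a b c d : ℝ) (p : ℝ × ℝ × ℝ) :
    (V a b c d p).1 + (V a b c d p).2.1 + (V a b c d p).2.2 = p.1 + p.2.1 + p.2.2 := by
  simp only [V]
  ring

theorem mapsTo_V_S2 {a b c d : ℝ} (ha0 : 0 ≤ a) (ha1 : a ≤ 1) (hb0 : 0 ≤ b) (hc0 : 0 ≤ c)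
    (hc1 : c ≤ 1) (hd1 : -(1 - b) ≤ d) (hd0 : d ≤ 0) :
    Set.MapsTo (V a b c d) S2 S2 := by
  rintro ⟨x, y, z⟩ ⟨hx, hy, hz, hsum⟩
  have hy1 : y ≤ 1 := by linarith
  have hdy : d ≤ d * y := by nlinarith
  have hcy : c * y ≤ 1 := by nlinarith
  refine ⟨?_, ?_, ?_, (V_sum a b c d _).trans hsum⟩
  · exact mul_nonneg hx (by linarith)
  · exact mul_nonneg hy (by nlinarith)
  · have := mul_nonneg hz (sub_nonneg.2 hcy)
    have := mul_nonneg ha0 hy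
    have := mul_nonneg hb0 hx
    dsimp only [V]
    linarith

theorem margin_V (a b c d : ℝ) (p : ℝ × ℝ × ℝ) :
    a + d * (V a b c d p).1 - c * (V a b c d p).2.2 =
      (1 - c * p.2.1) * (a + d * p.1 - c * p.2.2) - (c + d) * p.1 * (b - d * p.2.1) := by
  simp only [V]
  ring

theorem margin_V_pos {a b c d : ℝ} {p : ℝ × ℝ × ℝ} (hp : p ∈ S2) (hb0 : 0 ≤ b) (hc1 : c < 1)
    (hd0 : d ≤ 0) (hcd : c + d ≤ 0) (h : 0 < a + d * p.1 - c * p.2.2) :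
    0 < a + d * (V a b c d p).1 - c * (V a b c d p).2.2 := by
  obtain ⟨hx, hy, hz, hsum⟩ := hp
  have hcy : 0 < 1 - c * p.2.1 := by
    rcases le_or_gt c 0 with hc | hc <;> nlinarith
  have hcorr : (c + d) * p.1 * (b - d * p.2.1) ≤ 0 :=
    mul_nonpos_of_nonpos_of_nonneg (mul_nonpos_of_nonpos_of_nonneg hcd hx) (by nlinarith)
  rw [margin_V]
  linarith [mul_pos hcy h]

theorem stmt18_general (a b c d : ℝ) (ha0 : 0 ≤ a) (ha1 : a ≤ 1) (hb0 : 0 ≤ b)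
    (hac : a < c) (hd1 : -(1 - b) ≤ d)
    (hcd : c + d < 0) :
    Set.MapsTo (V a b c d) {p ∈ S2 | p.2.2 < (a + d * p.1) / c}
      {p ∈ S2 | p.2.2 < (a + d * p.1) / c} := by
  have hc0 : 0 < c := ha0.trans_lt hac
  have hd0 : d < 0 := by linarith
  have hc1 : c < 1 := by linarith
  have mem_iff {p : ℝ × ℝ × ℝ} : p.2.2 < (a + d * p.1) / c ↔ 0 < a + d * p.1 - c * p.2.2 := by
    rw [lt_div_iff₀ hc0, sub_pos, mul_comm]
  rintro p ⟨hp, hF⟩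
  refine ⟨mapsTo_V_S2 ha0 ha1 hb0 hc0.le hc1.le hd1 hd0.le hp, mem_iff.2 ?_⟩
  exact margin_V_pos hp hb0 hc1 hd0.le hcd.le (mem_iff.1 hF)

theorem stmt18 (a b c d : ℝ) (ha0 : 0 ≤ a) (ha1 : a ≤ 1) (hb0 : 0 ≤ b) (hb1 : b ≤ 1)
    (hac : a < c) (hc : c ≤ 1 + a) (hd1 : -(1 - b) ≤ d) (hdb : d < b)
    (hcd : c + d < 0) (hcne : c ≠ 0) (hdne : d ≠ 0) :
    Set.MapsTo (V a b c d) {p ∈ S2 | p.2.2 < (a + d * p.1) / c}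
      {p ∈ S2 | p.2.2 < (a + d * p.1) / c} :=
  stmt18_general a b c d ha0 ha1 hb0 hac hd1 hcd
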